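/- arXiv:2101.09229 — 3 statements merged into one kernel-verified Lean document; each statement's English description precedes it below -/
import Mathlib

section
/- Let C be a symmetric monoidal closed category with unit object 𝟙 and internal hom F(−,−). For an object X of C, the following three conditions are equivalent: (1) the canonical map ν_{X,Y} : F(X,𝟙) ⊗ Y ⟶ F(X,Y) is an isomorphism for every object Y; (2) the canonical map ν_{X,X} : F(X,𝟙) ⊗ X ⟶ F(X,X) is an isomorphism; (3) there exists a map coev : 𝟙 ⟶ X ⊗ F(X,𝟙) such that ν_{X,X} ∘ β_{X,F(X,𝟙)} ∘ coev = η_X, where β denotes the braiding and η_X : 𝟙 ⟶ F(X,X) is the adjoint transpose of the left unitor 𝟙 ⊗ X ≅ X. -/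
open CategoryTheory MonoidalCategory MonoidalClosed

universe v u

variable {C : Type u} [Category.{v} C] [MonoidalCategory C] [SymmetricCategory C]
  [MonoidalClosed C]

/-- The canonical map `ν_{X,Y} : F(X,𝟙) ⊗ Y ⟶ F(X,Y)`, obtained as the adjoint transpose
(currying) of the composite
`X ⊗ (F(X,𝟙) ⊗ Y) ≅ (X ⊗ F(X,𝟙)) ⊗ Y ⟶ 𝟙 ⊗ Y ≅ Y`,
where the middle map is the evaluation (counit of the tensor–hom adjunction at `𝟙`)
tensored with the identity of `Y`. -/
noncomputable def nu (X Y : C) : (ihom X).obj (𝟙_ C) ⊗ Y ⟶ (ihom X).obj Y :=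
  MonoidalClosed.curry
    ((α_ X ((ihom X).obj (𝟙_ C)) Y).inv ≫ ((ihom.ev X).app (𝟙_ C) ▷ Y) ≫ (λ_ Y).hom)

/-- `η_X : 𝟙 ⟶ F(X,X)`, the adjoint transpose of the unitor `X ⊗ 𝟙 ≅ X`. -/
noncomputable def etaMap (X : C) : 𝟙_ C ⟶ (ihom X).obj X :=
  MonoidalClosed.curry (ρ_ X).hom

/-! Condition (3) says that `coev ≫ β` and the evaluation `X ⊗ F(X,𝟙) ⟶ 𝟙` satisfy one
triangle identity. Since maps into `F(X,𝟙)` are detected after whiskering with `X` and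
evaluating, the other triangle identity follows, so `F(X,𝟙)` is a dual of `X`. Then
`g ↦ g ≫ ν_{X,Y}` is the duality bijection `(W ⟶ F(X,𝟙) ⊗ Y) ≃ (X ⊗ W ⟶ Y)` followed by
currying, so `ν_{X,Y}` is an isomorphism by Yoneda. Conversely, an inverse of `ν_{X,X}` gives
`coev := η_X ≫ ν_{X,X}⁻¹ ≫ β`. -/

section

variable {C : Type u} [Category.{v} C] [MonoidalCategory C]

theorem evaluation_coevaluation_of_coevaluation_evaluation {X D : C} (c : 𝟙_ C ⟶ D ⊗ X)
    (e : X ⊗ D ⟶ 𝟙_ C) (he : ∀ f g : D ⟶ D, X ◁ f ≫ e = X ◁ g ≫ e → f = g)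
    (h : X ◁ c ≫ (α_ _ _ _).inv ≫ e ▷ X = (ρ_ X).hom ≫ (λ_ X).inv) :
    c ▷ D ≫ (α_ _ _ _).hom ≫ D ◁ e = (λ_ D).hom ≫ (ρ_ D).inv := by
  rw [← cancel_mono (ρ_ D).hom, ← cancel_epi (λ_ D).inv]
  apply he
  have h' : X ◁ c ⊗≫ e ▷ X = ⊗𝟙.hom := by
    convert h using 1 <;> simp [monoidalComp]
  calc _ = 𝟙 _ ⊗≫ (X ◁ c) ▷ D ⊗≫ ((X ⊗ D) ◁ e ≫ e ▷ 𝟙_ C) ⊗≫ 𝟙 _ := by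
        monoidal
    _ = 𝟙 _ ⊗≫ (X ◁ c ⊗≫ e ▷ X) ▷ D ⊗≫ e := by
        rw [whisker_exchange]; monoidal
    _ = _ := by rw [h']; monoidal

variable [MonoidalClosed C]

theorem comp_nu {W X Y : C} (g : W ⟶ (ihom X).obj (𝟙_ C) ⊗ Y) :
    g ≫ nu X Y =
      curry (X ◁ g ≫ (α_ _ _ _).inv ≫ (ihom.ev X).app (𝟙_ C) ▷ Y ≫ (λ_ Y).hom) := by
  rw [nu, curry_natural_left]

theorem coevaluation_evaluation_of_comp_nu_eq_etaMap {X : C}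
    {c : 𝟙_ C ⟶ (ihom X).obj (𝟙_ C) ⊗ X} (hc : c ≫ nu X X = etaMap X) :
    X ◁ c ≫ (α_ _ _ _).inv ≫ (ihom.ev X).app (𝟙_ C) ▷ X = (ρ_ X).hom ≫ (λ_ X).inv := by
  rw [comp_nu, etaMap] at hc
  simpa [Iso.eq_comp_inv] using curry_injective hc

theorem isIso_nu_of_coevaluation_evaluation {X : C} (c : 𝟙_ C ⟶ (ihom X).obj (𝟙_ C) ⊗ X)
    (h : X ◁ c ≫ (α_ _ _ _).inv ≫ (ihom.ev X).app (𝟙_ C) ▷ X = (ρ_ X).hom ≫ (λ_ X).inv)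
    (Y : C) : IsIso (nu X Y) := by
  let : ExactPairing ((ihom X).obj (𝟙_ C)) X :=
    { coevaluation' := c
      evaluation' := (ihom.ev X).app (𝟙_ C)
      coevaluation_evaluation' := h
      evaluation_coevaluation' := evaluation_coevaluation_of_coevaluation_evaluation c _
        (fun _ _ hfg => uncurry_injective hfg) h }
  refine isIso_of_yoneda_map_bijective _ fun W => ?_
  convert ((ihom.adjunction X).homEquiv W Y).bijective.comp
    (tensorLeftHomEquiv W _ X Y).symm.bijective using 1
  funext g
  exact comp_nu g

end

/-- For an object `X` of a symmetric monoidal closed category,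
the following are equivalent:
(1) `ν_{X,Y}` is an isomorphism for every `Y`;
(2) `ν_{X,X}` is an isomorphism;
(3) there is a map `coev : 𝟙 ⟶ X ⊗ F(X,𝟙)` with
    `coev ≫ β_{X,F(X,𝟙)} ≫ ν_{X,X} = η_X`. -/
theorem strongly_dualizable_tfae (X : C) :
    ((∀ Y : C, IsIso (nu X Y)) ↔ IsIso (nu X X)) ∧
    (IsIso (nu X X) ↔
      ∃ coev : 𝟙_ C ⟶ X ⊗ (ihom X).obj (𝟙_ C),
        coev ≫ (β_ X ((ihom X).obj (𝟙_ C))).hom ≫ nu X X = etaMap X) := by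
  have two_three (h : IsIso (nu X X)) : ∃ coev : 𝟙_ C ⟶ X ⊗ (ihom X).obj (𝟙_ C),
      coev ≫ (β_ X ((ihom X).obj (𝟙_ C))).hom ≫ nu X X = etaMap X :=
    ⟨etaMap X ≫ inv (nu X X) ≫ (β_ _ X).hom, by simp [SymmetricCategory.symmetry_assoc]⟩
  have three_one : (∃ coev : 𝟙_ C ⟶ X ⊗ (ihom X).obj (𝟙_ C),
      coev ≫ (β_ X ((ihom X).obj (𝟙_ C))).hom ≫ nu X X = etaMap X) → ∀ Y, IsIso (nu X Y) :=
    fun ⟨coev, hcoev⟩ => isIso_nu_of_coevaluation_evaluation _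
      (coevaluation_evaluation_of_comp_nu_eq_etaMap (by rwa [Category.assoc]))
  exact ⟨⟨fun h => h X, fun h => three_one (two_three h)⟩, ⟨two_three, fun h => three_one h X⟩⟩
end

section
/- Let C be a symmetric monoidal closed category. If A is a retract of a strongly dualizable object X (i.e. there are maps s : A ⟶ X and r : X ⟶ A with r ∘ s = id_A), then A is strongly dualizable; that is, if ν_{X,Y} is an isomorphism for every object Y, then ν_{A,Y} is an isomorphism for every object Y. -/
/-!
The map `ν_{X,Y}` is natural in `X` with respect to precomposition `pre f : F(X,-) ⟶ F(A,-)`,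
so a retraction `A ⇄ X` makes `ν_{A,Y}` a retract of `ν_{X,Y}` in the arrow category,
and isomorphisms are stable under retracts.
-/

open CategoryTheory MonoidalCategory MonoidalClosed

universe v u

variable {C : Type u} [Category.{v} C] [MonoidalCategory C] [SymmetricCategory C]
  [MonoidalClosed C]

section

omit [SymmetricCategory C]

theorem nu_comp_pre_app {A X : C} (f : A ⟶ X) (Y : C) :
    nu X Y ≫ (pre f).app Y = ((pre f).app (𝟙_ C) ▷ Y) ≫ nu A Y := by
  apply uncurry_injective
  simp only [nu, uncurry_natural_left, uncurry_curry, uncurry_pre]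
  rw [whisker_exchange_assoc, ← uncurry_eq, uncurry_curry,
    associator_inv_naturality_left_assoc]
  conv_rhs => rw [associator_inv_naturality_middle_assoc, ← comp_whiskerRight_assoc,
    id_tensor_pre_app_comp_ev, comp_whiskerRight_assoc]

namespace CategoryTheory.Retract

theorem pre_app_comp_pre_app {A X : C} (h : Retract A X) (Z : C) :
    (pre h.r).app Z ≫ (pre h.i).app Z = 𝟙 _ := by
  rw [← NatTrans.comp_app, ← pre_map, h.retract, pre_id, NatTrans.id_app]

noncomputable def retractArrowNu {A X : C} (h : Retract A X) (Y : C) :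
    RetractArrow (nu A Y) (nu X Y) where
  i := Arrow.homMk ((pre h.r).app (𝟙_ C) ▷ Y) ((pre h.r).app Y) (nu_comp_pre_app h.r Y).symm
  r := Arrow.homMk ((pre h.i).app (𝟙_ C) ▷ Y) ((pre h.i).app Y) (nu_comp_pre_app h.i Y).symm
  retract := by
    ext
    · simp [← comp_whiskerRight, h.pre_app_comp_pre_app]
    · simp [h.pre_app_comp_pre_app]

end CategoryTheory.Retract

end

/-- A retract `A` of a strongly dualizable object `X` of a symmetric
monoidal closed category is strongly dualizable: if `ν_{X,Y}` is an isomorphism for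
every `Y`, then `ν_{A,Y}` is an isomorphism for every `Y`. -/
theorem retract_strongly_dualizable (X A : C) (s : A ⟶ X) (r : X ⟶ A)
    (hsr : s ≫ r = 𝟙 A) (hX : ∀ Y : C, IsIso (nu X Y)) :
    ∀ Y : C, IsIso (nu A Y) := fun Y =>
  (MorphismProperty.isomorphisms C).of_retract (Retract.retractArrowNu ⟨s, r, hsr⟩ Y) (hX Y)
end

section
/- Let l be a prime number and let R be a (not necessarily commutative) ring in which l·1 = 0. Let x ∈ R and suppose that the additive endomorphism ad(x) : b ↦ x·b − b·x is nilpotent, i.e. there is some k ≥ 1 with (ad x)^k = 0. Then there exists a natural number N such that x^(l^N) is central in R, i.e. x^(l^N)·b = b·x^(l^N) for every b ∈ R. -/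
/-!
Left and right multiplication by `x` are commuting additive endomorphisms of `R`, and
`ad x` is their difference. Since `l` kills the endomorphism ring too, the Frobenius identity
for commuting elements gives `(ad x)^(l^N) = ad (x^(l^N))`, and the left side vanishes as soon
as `l^N ≥ k`.
-/

/-- For `x` in a ring `R`, `ad x` is the additive map `b ↦ x * b - b * x`. -/
def adMap {R : Type*} [Ring R] (x : R) : R → R := fun b => x * b - b * x

theorem sub_pow_prime_pow_of_commute {S : Type*} [Ring S] {p : ℕ} (hp : p.Prime)
    (hS : (p : S) = 0) {a b : S} (hab : Commute a b) (n : ℕ) :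
    (a - b) ^ p ^ n = a ^ p ^ n - b ^ p ^ n := by
  cases subsingleton_or_nontrivial S
  · exact Subsingleton.elim _ _
  have : Fact p.Prime := ⟨hp⟩
  have : CharP S p := (CharP.charP_iff_prime_eq_zero hp).2 hS
  exact sub_pow_char_pow_of_commute _ _ hab

open LinearMap in
theorem adMap_eq_mulLeft_sub_mulRight {R : Type*} [Ring R] (x : R) :
    adMap x = ⇑(mulLeft ℤ x - mulRight ℤ x) := rfl

theorem Module.End.natCast_eq_zero_of_natCast_eq_zero {R : Type*} [Ring R] {n : ℕ}
    (h : (n : R) = 0) : (n : Module.End ℤ R) = 0 := by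
  ext b
  simp [nsmul_eq_mul, h]

open LinearMap in
theorem adMap_iterate_prime_pow {R : Type*} [Ring R] {p : ℕ} (hp : p.Prime)
    (hR : (p : R) = 0) (x b : R) (n : ℕ) :
    (adMap x)^[p ^ n] b = x ^ p ^ n * b - b * x ^ p ^ n := by
  rw [adMap_eq_mulLeft_sub_mulRight, ← Module.End.coe_pow,
    sub_pow_prime_pow_of_commute hp (Module.End.natCast_eq_zero_of_natCast_eq_zero hR)
      (commute_mulLeft_right x x), pow_mulLeft, pow_mulRight]
  rfl

theorem adMap_iterate_eq_zero_of_le {R : Type*} [Ring R] {x : R} {k m : ℕ}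
    (hnil : ∀ b, (adMap x)^[k] b = 0) (hkm : k ≤ m) (b : R) : (adMap x)^[m] b = 0 := by
  obtain ⟨j, rfl⟩ := Nat.exists_eq_add_of_le' hkm
  rw [Function.iterate_add_apply, hnil]
  exact Function.iterate_fixed (by simp [adMap]) j

theorem pow_central_of_ad_nilpotent_general {l : ℕ} (hl : l.Prime) {R : Type*} [Ring R]
    (hchar : (l : R) = 0) (x : R) (k : ℕ)
    (hnil : ∀ b : R, (adMap x)^[k] b = 0) :
    ∃ N : ℕ, ∀ b : R, x ^ l ^ N * b = b * x ^ l ^ N := by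
  obtain ⟨N, hN⟩ := pow_unbounded_of_one_lt k hl.one_lt
  refine ⟨N, fun b => sub_eq_zero.mp ?_⟩
  rw [← adMap_iterate_prime_pow hl hchar]
  exact adMap_iterate_eq_zero_of_le hnil hN.le b

/-- Let `l` be a prime and `R` a ring with `l • 1 = 0`.  If `ad x` is
nilpotent, then some power `x ^ (l ^ N)` of `x` is central in `R`. -/
theorem pow_central_of_ad_nilpotent {l : ℕ} (hl : l.Prime) {R : Type*} [Ring R]
    (hchar : (l : R) = 0) (x : R) (k : ℕ) (hk : 1 ≤ k)
    (hnil : ∀ b : R, (adMap x)^[k] b = 0) :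
    ∃ N : ℕ, ∀ b : R, x ^ l ^ N * b = b * x ^ l ^ N :=
  pow_central_of_ad_nilpotent_general hl hchar x k hnil
end
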